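/- For all natural numbers t' ≥ 1 and any real c ≥ 1, (t' + 1)/(t' + 1/c) ≤ 2. Consequently, for natural numbers K, L, N with binomial(N,L) ≥ 1, L ≥ 1, and 1 ≤ t' ≤ K, setting t = binomial(N,L)·t', the load L·(binomial(N,L)·K − t)/(t+1) of the virtual-user scheme satisfies L·(binomial(N,L)·K − t)/(t+1) = L·(K − t')/(t' + 1/binomial(N,L)) ≤ 2·L·(K − t')/(t' + 1). -/
import Mathlib


theorem virtual_user_load_factor_two :
    (∀ t' : ℕ, 1 ≤ t' → ∀ c : ℝ, 1 ≤ c →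
      ((t' : ℝ) + 1) / ((t' : ℝ) + 1 / c) ≤ 2) ∧
    (∀ K L N t' : ℕ, 1 ≤ Nat.choose N L → 1 ≤ L → 1 ≤ t' → t' ≤ K →
      (L : ℝ) * ((Nat.choose N L : ℝ) * K - (Nat.choose N L : ℝ) * t') /
          ((Nat.choose N L : ℝ) * t' + 1)
        = (L : ℝ) * ((K : ℝ) - t') / ((t' : ℝ) + 1 / (Nat.choose N L : ℝ)) ∧
      (L : ℝ) * ((Nat.choose N L : ℝ) * K - (Nat.choose N L : ℝ) * t') /
          ((Nat.choose N L : ℝ) * t' + 1)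
        ≤ 2 * (L : ℝ) * ((K : ℝ) - t') / ((t' : ℝ) + 1)) := by
  constructor
  · intro t' ht c hc
    have ht1 : (1 : ℝ) ≤ (t' : ℝ) := by exact_mod_cast ht
    have hc0 : (0 : ℝ) < c := by linarith
    have hden : (0 : ℝ) < (t' : ℝ) + 1 / c := by positivity
    rw [div_le_iff₀ hden]
    have h1c : 0 < 1 / c := by positivity
    linarith
  · intro K L N t' hC hL ht htK
    have hC1 : (1 : ℝ) ≤ (Nat.choose N L : ℝ) := by exact_mod_cast hC
    have hC0 : (0 : ℝ) < (Nat.choose N L : ℝ) := by linarith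
    have ht1 : (1 : ℝ) ≤ (t' : ℝ) := by exact_mod_cast ht
    have htK' : (t' : ℝ) ≤ (K : ℝ) := by exact_mod_cast htK
    have hL0 : (0 : ℝ) ≤ (L : ℝ) := by positivity
    set c : ℝ := (Nat.choose N L : ℝ)
    have hden1 : (0 : ℝ) < c * (t' : ℝ) + 1 := by positivity
    have hden2 : (0 : ℝ) < (t' : ℝ) + 1 / c := by positivity
    have hden3 : (0 : ℝ) < (t' : ℝ) + 1 := by linarith
    constructor
    · rw [div_eq_div_iff hden1.ne' hden2.ne']
      field_simp
    · rw [div_le_div_iff₀ hden1 hden3]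
      have key : 0 ≤ (L : ℝ) * ((K : ℝ) - (t' : ℝ)) := by
        apply mul_nonneg hL0; linarith
      nlinarith [mul_nonneg key (sub_nonneg.2 hC1), mul_nonneg key (sub_nonneg.2 ht1)]
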